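/- Let P be a probability generating function with nonnegative coefficients, P(1) = 1, mean m ∈ (0,1), and let r > 1 satisfy r > P(r). Let ξ_h = exp(2πih/n) and let C be the n×n Cauchy matrix with entries (r ξ_h - P(r ξ_j))^{-1}. Then for k = 1,…,n-1, the (k+1)-st singular value satisfies σ_{k+1}(C) ≤ θ^k n / ((1-θ)(r - p_0)), where θ = (P(r) - p_0)/(r - p_0) ∈ (0,1). -/

import Mathlib

open scoped Matrix Matrix.Norms.L2Operator

/-!
After shifting by `p₀`, the nodes `x_h = r ξ_h - p₀` satisfy `‖x_h‖ ≥ r - p₀`, while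
`y_j = P(r ξ_j) - p₀` satisfy `‖y_j‖ ≤ P(r) - p₀ = θ (r - p₀)` because `P` has nonnegative
coefficients. Truncating the geometric expansion `(x - y)⁻¹ = ∑ₘ yᵐ / xᵐ⁺¹` after `k` terms
gives a matrix of rank at most `k` whose entries differ from those of `C` by `(y/x)ᵏ / (x - y)`,
of modulus at most `θᵏ / ((1 - θ)(r - p₀))`; an `n × n` matrix with entries bounded by `M` has
spectral norm at most `n M`.
-/

/-- The `(k+1)`-st singular value of a matrix, characterized via Eckart–Young as the
distance (in spectral norm) to the set of matrices of rank at most `k`. -/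
noncomputable def singValSucc (n : ℕ) (C : Matrix (Fin n) (Fin n) ℂ) (k : ℕ) : ℝ :=
  sInf {t : ℝ | ∃ B : Matrix (Fin n) (Fin n) ℂ, B.rank ≤ k ∧ t = ‖C - B‖}

open Finset

namespace Matrix

variable {m n 𝕜 : Type*} [Fintype m] [Fintype n] [DecidableEq n] [RCLike 𝕜]

theorem l2_opNorm_le_of_norm_entry_le (A : Matrix m n 𝕜) {M : ℝ} (hM : 0 ≤ M)
    (h : ∀ i j, ‖A i j‖ ≤ M) : ‖A‖ ≤ √(Fintype.card m * Fintype.card n) * M := by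
  rw [l2_opNorm_def]
  refine ContinuousLinearMap.opNorm_le_bound _ (by positivity) fun x => ?_
  set y : EuclideanSpace 𝕜 m := (toEuclideanLin ≪≫ₗ LinearMap.toContinuousLinearMap) A x
  have hrow : ∀ i, ‖y i‖ ≤ M * ∑ j, ‖x j‖ := fun i => calc
    ‖y i‖ = ‖∑ j, A i j * x j‖ := rfl
    _ ≤ ∑ j, ‖A i j‖ * ‖x j‖ := (norm_sum_le _ _).trans_eq (by simp only [norm_mul])
    _ ≤ M * ∑ j, ‖x j‖ := by
      rw [mul_sum]; gcongr with j; exact h _ _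
  have hcs : (∑ j, ‖x j‖) ^ 2 ≤ Fintype.card n * ‖x‖ ^ 2 := by
    simpa [EuclideanSpace.norm_sq_eq] using sq_sum_le_card_mul_sum_sq (s := univ) (f := (‖x ·‖))
  have hy : ‖y‖ ^ 2 ≤ (√(Fintype.card m * Fintype.card n) * M * ‖x‖) ^ 2 := calc
    ‖y‖ ^ 2 = ∑ i, ‖y i‖ ^ 2 := EuclideanSpace.norm_sq_eq y
    _ ≤ ∑ _i : m, (M * ∑ j, ‖x j‖) ^ 2 := by gcongr with i; exact hrow i
    _ = Fintype.card m * M ^ 2 * (∑ j, ‖x j‖) ^ 2 := by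
      simp only [mul_pow, sum_const, card_univ, nsmul_eq_mul]; ring
    _ ≤ Fintype.card m * M ^ 2 * (Fintype.card n * ‖x‖ ^ 2) := by gcongr
    _ = (√(Fintype.card m * Fintype.card n) * M * ‖x‖) ^ 2 := by
      rw [mul_pow, mul_pow, Real.sq_sqrt (by positivity)]; ring
  exact (sq_le_sq₀ (norm_nonneg _) (by positivity)).mp hy

end Matrix

theorem inv_sub_sub_geom_sum {K : Type*} [Field K] {x w : K} (hx : x ≠ 0) (hxw : x - w ≠ 0)
    (k : ℕ) : (x - w)⁻¹ - ∑ i ∈ range k, w ^ i * x⁻¹ ^ (i + 1) = (w / x) ^ k / (x - w) := by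
  have hsum : ∑ i ∈ range k, w ^ i * x⁻¹ ^ (i + 1) = (∑ i ∈ range k, (w / x) ^ i) / x := by
    rw [sum_div]; refine sum_congr rfl fun i _ => ?_; rw [div_pow, inv_pow, pow_succ]; field_simp
  have hgeom := geom_sum_mul (w / x) k
  rw [hsum]
  field_simp
  field_simp at hgeom
  linear_combination hgeom

theorem norm_div_pow_div_sub_le {𝕜 : Type*} [NormedField 𝕜] {x w : 𝕜} {ρ θ : ℝ} (hρ : 0 < ρ)
    (hθ : θ < 1) (hx : ρ ≤ ‖x‖) (hw : ‖w‖ ≤ θ * ρ) (k : ℕ) :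
    ‖(w / x) ^ k / (x - w)‖ ≤ θ ^ k / ((1 - θ) * ρ) := by
  have hθ0 : 0 ≤ θ := nonneg_of_mul_nonneg_left ((norm_nonneg w).trans hw) hρ
  have hratio : ‖w / x‖ ≤ θ := by
    rw [norm_div, div_le_iff₀ (hρ.trans_le hx)]
    exact hw.trans (mul_le_mul_of_nonneg_left hx hθ0)
  have hgap : (1 - θ) * ρ ≤ ‖x - w‖ := by
    linarith [norm_sub_norm_le x w]
  rw [norm_div, norm_pow]
  gcongr

theorem singValSucc_le_of_rank_le {n k : ℕ} (C B : Matrix (Fin n) (Fin n) ℂ) (hB : B.rank ≤ k) :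
    singValSucc n C k ≤ ‖C - B‖ :=
  csInf_le ⟨0, by rintro _ ⟨B', -, rfl⟩; exact norm_nonneg _⟩ ⟨B, hB, rfl⟩

theorem singValSucc_cauchy_le {n : ℕ} (x y : Fin n → ℂ) (c : ℂ) {ρ θ : ℝ} (hρ : 0 < ρ)
    (hθ0 : 0 ≤ θ) (hθ : θ < 1) (hx : ∀ h, ρ ≤ ‖x h - c‖) (hy : ∀ j, ‖y j - c‖ ≤ θ * ρ) (k : ℕ) :
    singValSucc n (Matrix.of fun j h => (x h - y j)⁻¹) k ≤ θ ^ k * n / ((1 - θ) * ρ) := by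
  set B : Matrix (Fin n) (Fin n) ℂ := Matrix.of (fun j (i : Fin k) => (y j - c) ^ (i : ℕ)) *
    Matrix.of fun (i : Fin k) h => (x h - c)⁻¹ ^ ((i : ℕ) + 1)
  have hrank : B.rank ≤ k :=
    (Matrix.rank_mul_le_left _ _).trans <|
      (Matrix.rank_le_card_width _).trans_eq (Fintype.card_fin k)
  have hxc : ∀ h, x h - c ≠ 0 := fun h => norm_pos_iff.mp (hρ.trans_le (hx h))
  have hxy : ∀ j h, (x h - c) - (y j - c) ≠ 0 := fun j h => by
    refine norm_pos_iff.mp (lt_of_lt_of_le ?_ (norm_sub_norm_le _ _))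
    nlinarith [hx h, hy j]
  have hentry : ∀ j h, ‖(Matrix.of (fun j h => (x h - y j)⁻¹) - B) j h‖ ≤
      θ ^ k / ((1 - θ) * ρ) := fun j h => by
    have hBjh : B j h = ∑ i ∈ range k, (y j - c) ^ i * (x h - c)⁻¹ ^ (i + 1) :=
      Fin.sum_univ_eq_sum_range (fun i => (y j - c) ^ i * (x h - c)⁻¹ ^ (i + 1)) k
    rw [Matrix.sub_apply, Matrix.of_apply, hBjh, ← sub_sub_sub_cancel_right (x h) (y j) c,
      inv_sub_sub_geom_sum (hxc h) (hxy j h)]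
    exact norm_div_pow_div_sub_le hρ hθ (hx h) (hy j) k
  calc singValSucc n _ k ≤ ‖Matrix.of (fun j h => (x h - y j)⁻¹) - B‖ :=
        singValSucc_le_of_rank_le _ B hrank
    _ ≤ √(Fintype.card (Fin n) * Fintype.card (Fin n)) * (θ ^ k / ((1 - θ) * ρ)) :=
        Matrix.l2_opNorm_le_of_norm_entry_le _ (by have := sub_pos.2 hθ; positivity) hentry
    _ = θ ^ k * n / ((1 - θ) * ρ) := by
        rw [Fintype.card_fin, Real.sqrt_mul_self n.cast_nonneg]; ring

theorem norm_tsum_sub_zero_le {E : Type*} [NormedAddCommGroup E] [CompleteSpace E] {f : ℕ → E}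
    {g : ℕ → ℝ} (hg : Summable g) (hfg : ∀ j, ‖f j‖ ≤ g j) :
    ‖∑' j, f j - f 0‖ ≤ ∑' j, g j - g 0 := by
  have hf : Summable f := hg.of_norm_bounded hfg
  rw [hf.tsum_eq_zero_add, hg.tsum_eq_zero_add, add_sub_cancel_left, add_sub_cancel_left]
  exact tsum_of_norm_bounded ((summable_nat_add_iff 1).2 hg).hasSum fun j => hfg _

theorem norm_exp_two_pi_I_mul_div (h n : ℕ) :
    ‖Complex.exp (2 * Real.pi * Complex.I * h / n)‖ = 1 := by
  rw [show 2 * Real.pi * Complex.I * h / n = ((2 * Real.pi * h / n : ℝ) : ℂ) * Complex.I by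
    push_cast; ring]
  exact Complex.norm_exp_ofReal_mul_I _

theorem stmt_14_general (n : ℕ) (p : ℕ → ℝ) (hp : ∀ j, 0 ≤ p j)
    (r : ℝ) (hr : 1 < r) (hSr : Summable (fun j => p j * r ^ j))
    (hrP : (∑' j, p j * r ^ j) < r)
    (ξ : Fin n → ℂ) (hξ : ∀ h : Fin n, ξ h = Complex.exp (2 * Real.pi * Complex.I * (h : ℕ) / n))
    (C : Matrix (Fin n) (Fin n) ℂ)
    (hC : ∀ j h : Fin n, C j h = (r * ξ h - ∑' i : ℕ, (p i : ℂ) * (r * ξ j) ^ i)⁻¹)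
    (θ : ℝ) (hθ : θ = ((∑' j, p j * r ^ j) - p 0) / (r - p 0)) :
    ∀ k : ℕ, 1 ≤ k → k ≤ n - 1 →
      singValSucc n C k ≤ θ ^ k * n / ((1 - θ) * (r - p 0)) := by
  intro k _ _
  have hp0 : p 0 ≤ ∑' j, p j * r ^ j := by
    simpa using hSr.le_tsum 0 fun j _ => mul_nonneg (hp j) (pow_nonneg (by linarith) j)
  have hgap : 0 < r - p 0 := by linarith
  have hθ0 : 0 ≤ θ := hθ ▸ div_nonneg (by linarith) hgap.le
  have hθ1 : θ < 1 := by rw [hθ, div_lt_one hgap]; linarith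
  have hrξ : ∀ h, ‖(r : ℂ) * ξ h‖ = r := fun h => by
    rw [norm_mul, hξ, norm_exp_two_pi_I_mul_div, Complex.norm_real,
      Real.norm_of_nonneg (by linarith), mul_one]
  have hx : ∀ h, r - p 0 ≤ ‖(r : ℂ) * ξ h - p 0‖ := fun h => by
    have := norm_sub_norm_le ((r : ℂ) * ξ h) (p 0)
    rwa [hrξ h, Complex.norm_real, Real.norm_of_nonneg (hp 0)] at this
  have hy : ∀ j, ‖∑' i : ℕ, (p i : ℂ) * (r * ξ j) ^ i - p 0‖ ≤ θ * (r - p 0) := fun j => by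
    rw [hθ, div_mul_cancel₀ _ hgap.ne']
    simpa using norm_tsum_sub_zero_le (f := fun i => (p i : ℂ) * (r * ξ j) ^ i) hSr fun i => by
      rw [norm_mul, norm_pow, hrξ j, Complex.norm_real, Real.norm_of_nonneg (hp i)]
  have hCeq : C = Matrix.of fun j h => ((r : ℂ) * ξ h - ∑' i : ℕ, (p i : ℂ) * (r * ξ j) ^ i)⁻¹ :=
    Matrix.ext hC
  exact hCeq ▸ singValSucc_cauchy_le _ _ (p 0) hgap hθ0 hθ1 hx hy k

/-- Singular value decay of the discretized Cauchy matrix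
`C_{jh} = (r ξ_h - P(r ξ_j))⁻¹` at the scaled `n`-th roots of unity:
`σ_{k+1}(C) ≤ θ^k n / ((1-θ)(r - p_0))` with `θ = (P(r) - p_0)/(r - p_0)`. -/
theorem stmt_14 (n : ℕ) (hn : 0 < n) (p : ℕ → ℝ) (hp : ∀ j, 0 ≤ p j)
    (hsum : ∑' j, p j = 1)
    (hmean : 0 < (∑' j : ℕ, (j : ℝ) * p j) ∧ (∑' j : ℕ, (j : ℝ) * p j) < 1)
    (r : ℝ) (hr : 1 < r) (hSr : Summable (fun j => p j * r ^ j))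
    (hrP : (∑' j, p j * r ^ j) < r)
    (ξ : Fin n → ℂ) (hξ : ∀ h : Fin n, ξ h = Complex.exp (2 * Real.pi * Complex.I * (h : ℕ) / n))
    (C : Matrix (Fin n) (Fin n) ℂ)
    (hC : ∀ j h : Fin n, C j h = (r * ξ h - ∑' i : ℕ, (p i : ℂ) * (r * ξ j) ^ i)⁻¹)
    (θ : ℝ) (hθ : θ = ((∑' j, p j * r ^ j) - p 0) / (r - p 0)) :
    ∀ k : ℕ, 1 ≤ k → k ≤ n - 1 →
      singValSucc n C k ≤ θ ^ k * n / ((1 - θ) * (r - p 0)) :=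
  stmt_14_general n p hp r hr hSr hrP ξ hξ C hC θ hθ
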